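/- arXiv:0812.1410 — 3 statements merged into one kernel-verified Lean document; each statement's English description precedes it below -/
import Mathlib

section
/- Let n ≥ 2 and let U_1, ..., U_n be independent uniform[0,1) random variables and S = U_1 + ... + U_n. Then the random variables S - U_1, S - U_2, ..., S - U_n, each reduced modulo 1, are independent and each uniformly distributed on [0,1). -/
/-!
Pass to the circle `𝕋 = ℝ/ℤ`: the image of a uniform variable on `[0,1)` is Haar-distributed,
and `Int.fract` is the inverse chart. The vector `(S - U i)ᵢ` mod 1 is the image of `(U i)ᵢ` mod 1
under the continuous endomorphism `x ↦ (∑ x - xᵢ)ᵢ` of the compact group `𝕋ⁿ`. It is surjective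
for `n ≥ 2` because `𝕋` is divisible, so by uniqueness of Haar measure it preserves the Haar
probability measure on `𝕋ⁿ`, which is exactly the law of `n` independent uniform variables.
-/

open MeasureTheory ProbabilityTheory

section SumSubCoord

variable {ι A : Type*} [Fintype ι] [AddCommGroup A]

variable (ι A) in
def sumSubCoord : (ι → A) →+ (ι → A) where
  toFun x i := ∑ j, x j - x i
  map_zero' := by ext; simp
  map_add' x y := by ext; simp only [Pi.add_apply, Finset.sum_add_distrib]; abel

@[simp]
lemma sumSubCoord_apply (x : ι → A) (i : ι) : sumSubCoord ι A x i = ∑ j, x j - x i := rfl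

lemma continuous_sumSubCoord [TopologicalSpace A] [IsTopologicalAddGroup A] :
    Continuous (sumSubCoord ι A) :=
  continuous_pi fun i => (continuous_finsetSum _ fun j _ => continuous_apply j).sub
    (continuous_apply i)

lemma sumSubCoord_surjective [DivisibleBy A ℤ] (hι : Fintype.card ι ≠ 1) :
    Function.Surjective (sumSubCoord ι A) := by
  intro y
  have hne : (Fintype.card ι : ℤ) - 1 ≠ 0 := by omega
  -- `x i = s - y i` with `(card ι - 1) • s = ∑ y` is a preimage of `y`.
  set s : A := DivisibleBy.div (∑ i, y i) ((Fintype.card ι : ℤ) - 1)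
  have hs : ((Fintype.card ι : ℤ) - 1) • s = ∑ i, y i := DivisibleBy.div_cancel _ hne
  refine ⟨fun i => s - y i, funext fun i => ?_⟩
  rw [sumSubCoord_apply, Finset.sum_sub_distrib, Finset.sum_const, Finset.card_univ, ← hs,
    ← natCast_zsmul, sub_zsmul, one_zsmul]
  abel

end SumSubCoord

namespace AddCircle

variable {T : ℝ} [Fact (0 < T)]

lemma measurePreserving_mk_Ico (t : ℝ) :
    MeasurePreserving ((↑) : ℝ → AddCircle T) (volume.restrict (Set.Ico t (t + T))) volume := by
  rw [Measure.restrict_congr_set Ico_ae_eq_Ioc]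
  exact AddCircle.measurePreserving_mk T t

lemma measurable_liftIco {β : Type*} [MeasurableSpace β] {t : ℝ} {f : ℝ → β} (hf : Measurable f) :
    Measurable (liftIco T t f) :=
  (hf.comp measurable_subtype_coe).comp (measurableEquivIco T t).measurable

lemma measurePreserving_liftIco_id (t : ℝ) :
    MeasurePreserving (liftIco T t id) volume (volume.restrict (Set.Ico t (t + T))) := by
  refine ⟨measurable_liftIco measurable_id, ?_⟩
  rw [← (measurePreserving_mk_Ico t).map_eq,
    Measure.map_map (measurable_liftIco measurable_id) AddCircle.measurable_mk']
  have h : liftIco T t id ∘ ((↑) : ℝ → AddCircle T) =ᵐ[volume.restrict (Set.Ico t (t + T))] id := by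
    filter_upwards [ae_restrict_mem measurableSet_Ico] with x hx
    exact liftIco_coe_apply hx
  rw [Measure.map_congr h, Measure.map_id]

end AddCircle

namespace UnitAddCircle

instance : Fact ((0 : ℝ) < 1) := ⟨one_pos⟩

instance : IsProbabilityMeasure (volume : Measure UnitAddCircle) := ⟨by simp⟩

lemma measurePreserving_mk_Ico :
    MeasurePreserving ((↑) : ℝ → UnitAddCircle) (volume.restrict (Set.Ico 0 1)) volume := by
  simpa using AddCircle.measurePreserving_mk_Ico (T := 1) 0

lemma measurePreserving_liftIco_zero_id :
    MeasurePreserving (AddCircle.liftIco 1 0 id) volume (volume.restrict (Set.Ico (0 : ℝ) 1)) := by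
  simpa using AddCircle.measurePreserving_liftIco_id (T := 1) 0

lemma liftIco_zero_id_coe (x : ℝ) :
    AddCircle.liftIco 1 0 id (x : UnitAddCircle) = Int.fract x := by
  have hx : Int.fract x ∈ Set.Ico (0 : ℝ) (0 + 1) := by
    rw [zero_add]
    exact ⟨Int.fract_nonneg x, Int.fract_lt_one x⟩
  rw [← AddCircle.coe_fract, AddCircle.liftIco_coe_apply hx, id]

end UnitAddCircle

theorem sum_minus_coordinates_iid_uniform
    {Ω : Type*} [MeasurableSpace Ω] (μ : Measure Ω) [IsProbabilityMeasure μ]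
    (n : ℕ) (hn : 2 ≤ n)
    (U : Fin n → Ω → ℝ)
    (hmeas : ∀ i, Measurable (U i))
    (hindep : iIndepFun U μ)
    (hunif : ∀ i, μ.map (U i) = volume.restrict (Set.Ico (0:ℝ) 1)) :
    let V : Fin n → Ω → ℝ := fun i ω => Int.fract ((∑ j, U j ω) - U i ω)
    iIndepFun V μ ∧
      ∀ i, μ.map (V i) = volume.restrict (Set.Ico (0:ℝ) 1) := by
  intro V
  have hcoe : ∀ i, HasLaw (fun ω => (U i ω : UnitAddCircle)) volume μ := fun i =>
    UnitAddCircle.measurePreserving_mk_Ico.comp_hasLaw ⟨(hmeas i).aemeasurable, hunif i⟩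
  have hcoe_joint : HasLaw (fun ω i => (U i ω : UnitAddCircle)) (Measure.pi fun _ => volume) μ :=
    (hindep.comp _ fun _ => AddCircle.measurable_mk').hasLaw_pi hcoe
  have hsub_joint : HasLaw (fun ω i => ((∑ j, U j ω - U i ω : ℝ) : UnitAddCircle))
      (Measure.pi fun _ => volume) μ := by
    have hφ : MeasurePreserving (sumSubCoord (Fin n) UnitAddCircle)
        (Measure.pi fun _ => volume) (Measure.pi fun _ => volume) :=
      AddMonoidHom.measurePreserving continuous_sumSubCoord
        (sumSubCoord_surjective (by rw [Fintype.card_fin]; omega)) rfl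
    convert hφ.comp_hasLaw hcoe_joint using 2 with ω
    ext i
    simp
  have hV_joint : HasLaw (fun ω i => V i ω)
      (Measure.pi fun _ => volume.restrict (Set.Ico (0:ℝ) 1)) μ := by
    convert (measurePreserving_pi _ _ fun _ =>
      UnitAddCircle.measurePreserving_liftIco_zero_id).comp_hasLaw hsub_joint using 2 with ω
    exact funext fun i => (UnitAddCircle.liftIco_zero_id_coe _).symm
  have : IsProbabilityMeasure (volume.restrict (Set.Ico (0:ℝ) 1)) := ⟨by simp⟩
  have hV : ∀ i, HasLaw (V i) (volume.restrict (Set.Ico (0:ℝ) 1)) μ := fun i =>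
    (measurePreserving_eval _ i).comp_hasLaw hV_joint
  exact ⟨(iIndepFun_iff_hasLaw_pi_pi hV).2 hV_joint, fun i => (hV i).map_eq⟩
end

section
/- Let T be a self-adjoint Hilbert–Schmidt integral operator with symmetric kernel φ: X × X → [0,1] on a probability space (X, μ), with eigenvalues (λ_i). Then for every integer k ≥ 2, ∫···∫ φ(x_1,x_2)φ(x_2,x_3)···φ(x_k,x_1) dμ(x_1)···dμ(x_k) = Tr(T^k) = ∑_i λ_i^k. -/
/-!
Integrating out the variables of the cycle one at a time turns the cycle integral of length `k`
into `∫ K(z, z) dμ(z)`, where `K` is the kernel of `T^k` obtained by iterated integration.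
Since `z ↦ ⟪φ(z, ·), h⟫` represents `T h`, the kernel of `T^(p+2)` is
`K(x, y) = ⟪φ(x, ·), T^p φ(y, ·)⟫`. Expanding in the eigenbasis,
`K(z, z) = ∑ λᵢ^p ⟪φ(z, ·), eᵢ⟫²`, and `∫ ⟪φ(z, ·), eᵢ⟫² dμ(z) = ‖T eᵢ‖² = λᵢ²`; the sum and the
integral commute by dominated convergence, with dominating function `‖T‖^p ‖φ(z, ·)‖²`.
-/

open MeasureTheory

theorem MeasureTheory.integral_pi_fin_succ_eq_integral_integral_snoc {X E : Type*}
    [MeasurableSpace X] [NormedAddCommGroup E] [NormedSpace ℝ E] {μ : Measure X} [SigmaFinite μ]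
    {n : ℕ} {F : (Fin (n + 1) → X) → E} (hF : Integrable F (Measure.pi fun _ => μ)) :
    ∫ v, F v ∂(Measure.pi fun _ => μ) =
      ∫ w, ∫ z, F (Fin.snoc w z) ∂μ ∂(Measure.pi fun _ : Fin n => μ) := by
  have hmp := (measurePreserving_piFinSuccAbove (fun _ : Fin (n + 1) => μ) (Fin.last n)).symm
  rw [← hmp.integral_comp', integral_prod_symm]
  · simp [MeasurableEquiv.piFinSuccAbove_symm_apply, Fin.insertNthEquiv, Fin.insertNth_last']
  · exact hmp.integrable_comp_emb (MeasurableEquiv.measurableEmbedding _) |>.mpr hF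

section IterKernel

variable {X : Type*} [MeasurableSpace X] (μ : Measure X) (φ : X → X → ℝ)

/-- `iterKernel μ φ n` is the kernel of the `(n + 1)`-st power of the integral operator. -/
noncomputable def iterKernel : ℕ → X → X → ℝ
  | 0 => φ
  | n + 1 => fun x y => ∫ z, φ x z * iterKernel n z y ∂μ

variable {μ φ}

@[simp]
theorem iterKernel_zero : iterKernel μ φ 0 = φ := rfl

theorem iterKernel_succ (n : ℕ) (x y : X) :
    iterKernel μ φ (n + 1) x y = ∫ z, φ x z * iterKernel μ φ n z y ∂μ := rfl

theorem measurable_uncurry_iterKernel [SFinite μ] (hφ : Measurable (Function.uncurry φ)) (n : ℕ) :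
    Measurable (Function.uncurry (iterKernel μ φ n)) := by
  induction n with
  | zero => exact hφ
  | succ n ih =>
    have h : Measurable fun q : (X × X) × X => φ q.1.1 q.2 * iterKernel μ φ n q.2 q.1.2 :=
      (hφ.comp (measurable_fst.fst.prodMk measurable_snd)).mul
        (ih.comp (measurable_snd.prodMk measurable_fst.snd))
    exact (h.stronglyMeasurable.integral_prod_right' (ν := μ)).measurable

theorem abs_iterKernel_le_one [IsProbabilityMeasure μ] (hφ : ∀ x y, |φ x y| ≤ 1) (n : ℕ)
    (x y : X) : |iterKernel μ φ n x y| ≤ 1 := by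
  induction n generalizing x y with
  | zero => exact hφ x y
  | succ n ih =>
    have h := norm_integral_le_of_norm_le_const (μ := μ) (C := 1)
      (f := fun z => φ x z * iterKernel μ φ n z y) (ae_of_all _ fun z => by
        simpa [abs_mul] using mul_le_one₀ (hφ x z) (abs_nonneg _) (ih z y))
    simpa [iterKernel_succ] using h

theorem integrable_iterKernel_diag [IsProbabilityMeasure μ]
    (hφm : Measurable (Function.uncurry φ)) (hφ : ∀ x y, |φ x y| ≤ 1) (n : ℕ) :
    Integrable (fun z => iterKernel μ φ n z z) μ :=
  .of_bound
    ((measurable_uncurry_iterKernel hφm n).comp (measurable_id.prodMk measurable_id)).aestronglyMeasurable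
    1 (ae_of_all _ fun z => abs_iterKernel_le_one hφ n z z)

end IterKernel

section Cycle

variable {X : Type*} {φ : X → X → ℝ}

theorem prod_castSucc_succ_snoc {m : ℕ} (w : Fin (m + 1) → X) (z : X) :
    ∏ j : Fin (m + 1), φ ((Fin.snoc w z : Fin (m + 2) → X) j.castSucc)
      ((Fin.snoc w z : Fin (m + 2) → X) j.succ) =
      (∏ j : Fin m, φ (w j.castSucc) (w j.succ)) * φ (w (Fin.last m)) z := by
  rw [Fin.prod_univ_castSucc]
  simp only [Fin.succ_castSucc, Fin.snoc_castSucc, Fin.succ_last, Fin.snoc_last]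

theorem abs_prod_castSucc_succ_le_one (hφ : ∀ x y, |φ x y| ≤ 1) {m : ℕ} (x : Fin (m + 1) → X) :
    |∏ j : Fin m, φ (x j.castSucc) (x j.succ)| ≤ 1 := by
  rw [Finset.abs_prod]
  exact Finset.prod_le_one (fun _ _ => abs_nonneg _) fun _ _ => hφ _ _

variable [MeasurableSpace X] {μ : Measure X} [IsProbabilityMeasure μ]

theorem integral_path_mul_iterKernel (hφm : Measurable (Function.uncurry φ))
    (hφ : ∀ x y, |φ x y| ≤ 1) (m p : ℕ) :
    ∫ x : Fin (m + 1) → X, (∏ j : Fin m, φ (x j.castSucc) (x j.succ)) *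
        iterKernel μ φ p (x (Fin.last m)) (x 0) ∂(Measure.pi fun _ => μ) =
      ∫ z, iterKernel μ φ (p + m) z z ∂μ := by
  induction m generalizing p with
  | zero =>
    convert (measurePreserving_funUnique μ (Fin 1)).integral_comp'
      (fun z => iterKernel μ φ p z z) using 1
    · simp only [Finset.univ_eq_empty, Finset.prod_empty, one_mul]
      rfl
    · simp
  | succ m ih =>
    have hint : Integrable (fun x : Fin (m + 2) → X =>
        (∏ j : Fin (m + 1), φ (x j.castSucc) (x j.succ)) *
          iterKernel μ φ p (x (Fin.last (m + 1))) (x 0)) (Measure.pi fun _ => μ) := by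
      refine .of_bound (Measurable.aestronglyMeasurable ?_) 1 (ae_of_all _ fun x => ?_)
      · exact (Finset.measurable_prod _ fun j _ => hφm.comp
          ((measurable_pi_apply _).prodMk (measurable_pi_apply _))).mul
          ((measurable_uncurry_iterKernel (μ := μ) hφm p).comp
            (f := fun x : Fin (m + 2) → X => (x (Fin.last _), x 0))
            ((measurable_pi_apply _).prodMk (measurable_pi_apply _)))
      · rw [Real.norm_eq_abs, abs_mul]
        exact mul_le_one₀ (abs_prod_castSucc_succ_le_one hφ x) (abs_nonneg _)
          (abs_iterKernel_le_one hφ p _ _)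
    rw [integral_pi_fin_succ_eq_integral_integral_snoc hint,
      show p + (m + 1) = p + 1 + m by omega, ← ih (p + 1)]
    congr 1 with w
    simp only [prod_castSucc_succ_snoc, Fin.snoc_last, Fin.snoc_apply_zero, mul_assoc,
      integral_const_mul, iterKernel_succ]

theorem integral_cycle_eq_integral_iterKernel_diag (hφm : Measurable (Function.uncurry φ))
    (hφ : ∀ x y, |φ x y| ≤ 1) (n : ℕ) :
    ∫ x : Fin (n + 1) → X, ∏ i, φ (x i) (x (i + 1)) ∂(Measure.pi fun _ => μ) =
      ∫ z, iterKernel μ φ n z z ∂μ := by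
  simpa [Fin.prod_univ_castSucc, Fin.coeSucc_eq_succ] using
    integral_path_mul_iterKernel (μ := μ) hφm hφ n 0

end Cycle

section KernelOperator

variable {X : Type*} [MeasurableSpace X] {μ : Measure X} {φ : X → X → ℝ}

def IsIntegralOperator (μ : Measure X) (φ : X → X → ℝ) (T : Lp ℝ 2 μ →L[ℝ] Lp ℝ 2 μ) : Prop :=
  ∀ g : Lp ℝ 2 μ, (T g : X → ℝ) =ᵐ[μ] fun x => ∫ y, φ x y * g y ∂μ

noncomputable def kernelRow (hrow : ∀ x, MemLp (φ x) 2 μ) (x : X) : Lp ℝ 2 μ :=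
  (hrow x).toLp (φ x)

variable (hrow : ∀ x, MemLp (φ x) 2 μ) {T : Lp ℝ 2 μ →L[ℝ] Lp ℝ 2 μ}

theorem inner_kernelRow (x : X) (h : Lp ℝ 2 μ) :
    inner ℝ (kernelRow hrow x) h = ∫ y, φ x y * h y ∂μ := by
  rw [L2.inner_def]
  refine integral_congr_ae ?_
  filter_upwards [(hrow x).coeFn_toLp] with y hy
  simp [kernelRow, hy, mul_comm]

theorem inner_kernelRow_ae_eq (hT : IsIntegralOperator μ φ T) (h : Lp ℝ 2 μ) :
    (fun x => inner ℝ (kernelRow hrow x) h) =ᵐ[μ] T h := by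
  simpa only [inner_kernelRow] using (hT h).symm

theorem integral_mul_inner_kernelRow (hT : IsIntegralOperator μ φ T) (x : X) (h : Lp ℝ 2 μ) :
    ∫ z, φ x z * inner ℝ (kernelRow hrow z) h ∂μ = inner ℝ (kernelRow hrow x) (T h) := by
  rw [inner_kernelRow]
  refine integral_congr_ae ?_
  filter_upwards [inner_kernelRow_ae_eq hrow hT h] with z hz
  rw [hz]

theorem integral_inner_kernelRow_mul_inner_kernelRow (hT : IsIntegralOperator μ φ T)
    (h h' : Lp ℝ 2 μ) :
    ∫ z, inner ℝ (kernelRow hrow z) h * inner ℝ (kernelRow hrow z) h' ∂μ =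
      inner ℝ (T h) (T h') := by
  rw [L2.inner_def]
  refine integral_congr_ae ?_
  filter_upwards [inner_kernelRow_ae_eq hrow hT h, inner_kernelRow_ae_eq hrow hT h']
    with z hz hz'
  simp [hz, hz', mul_comm]

theorem iterKernel_succ_eq_inner_kernelRow (hφ : ∀ x y, φ x y = φ y x)
    (hT : IsIntegralOperator μ φ T) (p : ℕ) (x y : X) :
    iterKernel μ φ (p + 1) x y = inner ℝ (kernelRow hrow x) ((T ^ p) (kernelRow hrow y)) := by
  induction p generalizing x with
  | zero =>
    rw [pow_zero, one_apply_eq_self, inner_kernelRow, iterKernel_succ]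
    refine integral_congr_ae ?_
    filter_upwards [(hrow y).coeFn_toLp] with z hz
    simp [kernelRow, hz, hφ z y]
  | succ p ih =>
    simp only [iterKernel_succ] at ih ⊢
    simp_rw [ih, integral_mul_inner_kernelRow hrow hT, pow_succ', mul_apply_eq_comp]

end KernelOperator

namespace HilbertBasis

variable {ι 𝕜 E : Type*} [RCLike 𝕜] [NormedAddCommGroup E] [InnerProductSpace 𝕜 E]
  (e : HilbertBasis ι 𝕜 E) {A : E →L[𝕜] E} {c : ι → 𝕜}

theorem inner_apply_of_apply_eq_smul (hA : ∀ i, A (e i) = c i • e i) (i : ι) (v : E) :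
    inner 𝕜 (e i) (A v) = c i * inner 𝕜 (e i) v := by
  have h : (innerSL 𝕜 (e i)).comp A = c i • innerSL 𝕜 (e i) := by
    refine ContinuousLinearMap.ext_on
      (Submodule.dense_iff_topologicalClosure_eq_top.mpr e.dense_span) ?_
    rintro _ ⟨j, rfl⟩
    simp only [ContinuousLinearMap.comp_apply, innerSL_apply_apply, hA, inner_smul_right,
      smul_apply, smul_eq_mul]
    obtain rfl | hij := eq_or_ne i j
    · rfl
    · simp [e.orthonormal.2 hij]
  simpa using congrArg (· v) h

theorem inner_pow_apply_of_apply_eq_smul (hA : ∀ i, A (e i) = c i • e i) (p : ℕ) (i : ι)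
    (v : E) : inner 𝕜 (e i) ((A ^ p) v) = c i ^ p * inner 𝕜 (e i) v := by
  induction p with
  | zero => simp
  | succ p ih =>
    rw [pow_succ', mul_apply_eq_comp, e.inner_apply_of_apply_eq_smul hA, ih, pow_succ', mul_assoc]

theorem hasSum_mul_inner_mul_inner_of_apply_eq_smul (hA : ∀ i, A (e i) = c i • e i) (p : ℕ)
    (u v : E) :
    HasSum (fun i => c i ^ p * (inner 𝕜 u (e i) * inner 𝕜 (e i) v)) (inner 𝕜 u ((A ^ p) v)) := by
  convert e.hasSum_inner_mul_inner u ((A ^ p) v) using 2 with i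
  rw [e.inner_pow_apply_of_apply_eq_smul hA]
  ring

end HilbertBasis

theorem hasSum_integral_inner_kernelRow_pow {X ι : Type*} [MeasurableSpace X] [Countable ι]
    {μ : Measure X} {φ : X → X → ℝ} (hrow : ∀ x, MemLp (φ x) 2 μ)
    {T : Lp ℝ 2 μ →L[ℝ] Lp ℝ 2 μ} (hT : IsIntegralOperator μ φ T)
    (hHS : Integrable (fun z => ‖kernelRow hrow z‖ ^ 2) μ)
    (e : HilbertBasis ι ℝ (Lp ℝ 2 μ)) {c : ι → ℝ} (hTe : ∀ i, T (e i) = c i • e i) (p : ℕ) :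
    HasSum (fun i => c i ^ (p + 2))
      (∫ z, inner ℝ (kernelRow hrow z) ((T ^ p) (kernelRow hrow z)) ∂μ) := by
  set a : ι → X → ℝ := fun i z => inner ℝ (kernelRow hrow z) (e i)
  have ha : ∀ i, a i =ᵐ[μ] T (e i) := fun i => inner_kernelRow_ae_eq hrow hT (e i)
  have hsq : ∀ z, HasSum (fun i => a i z * a i z) (‖kernelRow hrow z‖ ^ 2) := fun z => by
    rw [← real_inner_self_eq_norm_sq]
    simpa only [a, real_inner_comm (kernelRow hrow z)] using
      e.hasSum_inner_mul_inner (kernelRow hrow z) (kernelRow hrow z)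
  have hc : ∀ i, |c i| ≤ ‖T‖ := fun i => by
    simpa [hTe, norm_smul, e.orthonormal.1 i] using T.le_opNorm (e i)
  have h := hasSum_integral_of_dominated_convergence (μ := μ)
    (F := fun i z => c i ^ p * (a i z * a i z))
    (f := fun z => inner ℝ (kernelRow hrow z) ((T ^ p) (kernelRow hrow z)))
    (fun i z => ‖T‖ ^ p * (a i z * a i z))
    (fun i => (((Lp.aestronglyMeasurable _).congr (ha i).symm).mul
      ((Lp.aestronglyMeasurable _).congr (ha i).symm)).const_mul _)
    (fun i => ae_of_all _ fun z => by
      rw [Real.norm_eq_abs, abs_mul, abs_pow, abs_mul_self]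
      exact mul_le_mul_of_nonneg_right (pow_le_pow_left₀ (abs_nonneg _) (hc i) p)
        (mul_self_nonneg _))
    (ae_of_all _ fun z => ((hsq z).mul_left _).summable)
    (by simpa only [((hsq _).mul_left _).tsum_eq] using hHS.const_mul (‖T‖ ^ p))
    (ae_of_all _ fun z => by
      simpa [a, real_inner_comm] using
        e.hasSum_mul_inner_mul_inner_of_apply_eq_smul hTe p (kernelRow hrow z) (kernelRow hrow z))
  have hterm : ∀ i, ∫ z, c i ^ p * (a i z * a i z) ∂μ = c i ^ (p + 2) := fun i => by
    rw [integral_const_mul, integral_inner_kernelRow_mul_inner_kernelRow hrow hT, hTe,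
      real_inner_smul_left, real_inner_smul_right, real_inner_self_eq_norm_sq, e.orthonormal.1 i]
    ring
  simpa only [hterm] using h

theorem cycle_integral_eq_sum_eigenvalue_powers
    {X : Type*} [MeasurableSpace X] (μ : Measure X) [IsProbabilityMeasure μ]
    (φ : X → X → ℝ)
    (hφmeas : Measurable (Function.uncurry φ))
    (hφsymm : ∀ x y, φ x y = φ y x)
    (hφ01 : ∀ x y, φ x y ∈ Set.Icc (0:ℝ) 1)
    (T : Lp ℝ 2 μ →L[ℝ] Lp ℝ 2 μ)
    (hT : ∀ g : Lp ℝ 2 μ, (T g : X → ℝ) =ᵐ[μ] fun x => ∫ y, φ x y * g y ∂μ)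
    (lam : ℕ → ℝ) (e : HilbertBasis ℕ ℝ (Lp ℝ 2 μ))
    (heig : ∀ i, T (e i) = lam i • e i)
    (k : ℕ) (hk : 2 ≤ k) :
    ∫ x : Fin k → X, ∏ i, φ (x i) (x ⟨(i.val + 1) % k, Nat.mod_lt _ (by omega)⟩) ∂(Measure.pi fun _ => μ) =
      ∑' i, lam i ^ k := by
  obtain ⟨m, rfl⟩ : ∃ m, k = m + 2 := ⟨k - 2, by omega⟩
  have hφ : ∀ x y, |φ x y| ≤ 1 := fun x y => abs_le.2 ⟨by linarith [(hφ01 x y).1], (hφ01 x y).2⟩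
  have hrow : ∀ x, MemLp (φ x) 2 μ := fun x =>
    .of_bound hφmeas.of_uncurry_left.aestronglyMeasurable 1 (ae_of_all _ (hφ x))
  have hK : ∀ p z, iterKernel μ φ (p + 1) z z =
      inner ℝ (kernelRow hrow z) ((T ^ p) (kernelRow hrow z)) :=
    fun p z => iterKernel_succ_eq_inner_kernelRow hrow hφsymm hT p z z
  have hHS : Integrable (fun z => ‖kernelRow hrow z‖ ^ 2) μ := by
    refine (integrable_iterKernel_diag hφmeas hφ 1).congr (ae_of_all _ fun z => ?_)
    simp only [hK 0, pow_zero, one_apply_eq_self, real_inner_self_eq_norm_sq]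
  have hcycle : ∀ (x : Fin (m + 2) → X) (i : Fin (m + 2)),
      x ⟨(i.val + 1) % (m + 2), Nat.mod_lt _ (by omega)⟩ = x (i + 1) := fun _ _ => rfl
  simp_rw [hcycle, integral_cycle_eq_integral_iterKernel_diag hφmeas hφ (m + 1), hK]
  exact ((hasSum_integral_inner_kernelRow_pow hrow hT hHS e heig m).tsum_eq).symm
end

section
/- Let g: [0,1) → [0,∞) be integrable with ∫_0^1 g(x) dx = p, and define φ(x_1, x_2) = g(x_1 ⊕ x_2) where ⊕ is addition modulo 1, with μ Lebesgue measure on [0,1). Then the associated integral operator T on L^2[0,1) satisfies: the constant function 1 is an eigenfunction with eigenvalue p, and for each k ≥ 1 the nonzero eigenvalues arising from frequency ±k are ±|ĝ(k)| where ĝ(k) = ∫_0^1 g(x) e^{−2πikx} dx; consequently ∑_{i ≥ 2} λ_i^3 = 0 where the sum is over eigenvalues other than the one with constant eigenfunction. -/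
/-!
Substituting `u = x ⊕ y`, which preserves Lebesgue measure on `ℝ/ℤ`, and factoring
`e_k(y) = e_{-k}(x) e_k(u)` shows that the kernel `g(x ⊕ y)` sends `e_k` to `ĝ(-k) e_{-k}`.
Since `g` is real, `ĝ(-k) = conj ĝ(k)`, so with `ω = ĝ(k)/|ĝ(k)|` the operator maps
`ω e_k ± e_{-k}` to `±|ĝ(k)| (ω e_k ± e_{-k})`. The eigenvalue attached to `-k` is thus minus
the one attached to `k`, and odd powers cancel under `k ↦ -k`.
-/

open MeasureTheory Real

lemma periodic_comp_fract {β : Type*} (F : ℝ → β) :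
    Function.Periodic (fun y => F (Int.fract y)) 1 := by
  intro y
  simp

section FractTranslation

variable {E : Type*} [NormedAddCommGroup E]

lemma intervalIntegrable_comp_fract {F : ℝ → E} (hF : IntegrableOn F (Set.Ico 0 1))
    (a b : ℝ) :
    IntervalIntegrable (fun y => F (Int.fract y)) volume a b := by
  refine (periodic_comp_fract F).intervalIntegrable₀ one_ne_zero ?_ a b
  rw [intervalIntegrable_iff_integrableOn_Ico_of_le zero_le_one]
  exact hF.congr_fun (fun y hy => by simp [Int.fract_eq_self.mpr hy]) measurableSet_Ico

lemma integrableOn_Ico_comp_fract_add {F : ℝ → E} (hF : IntegrableOn F (Set.Ico 0 1))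
    (x : ℝ) :
    IntegrableOn (fun y => F (Int.fract (x + y))) (Set.Ico 0 1) := by
  have h := (intervalIntegrable_comp_fract hF x (x + 1)).comp_add_left x
  rw [sub_self, add_sub_cancel_left,
    intervalIntegrable_iff_integrableOn_Ico_of_le zero_le_one] at h
  exact h

variable [NormedSpace ℝ E]

lemma setIntegral_Ico_eq_intervalIntegral (F : ℝ → E) :
    ∫ y in Set.Ico (0:ℝ) 1, F y = ∫ y in (0:ℝ)..1, F y := by
  rw [intervalIntegral.integral_of_le zero_le_one]
  exact setIntegral_congr_set Ico_ae_eq_Ioc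

lemma setIntegral_Ico_comp_fract (F : ℝ → E) :
    ∫ y in Set.Ico (0:ℝ) 1, F (Int.fract y) = ∫ y in Set.Ico (0:ℝ) 1, F y :=
  setIntegral_congr_fun measurableSet_Ico fun y hy => by simp [Int.fract_eq_self.mpr hy]

lemma setIntegral_Ico_comp_fract_add (F : ℝ → E) (x : ℝ) :
    ∫ y in Set.Ico (0:ℝ) 1, F (Int.fract (x + y)) = ∫ y in Set.Ico (0:ℝ) 1, F y := by
  rw [setIntegral_Ico_eq_intervalIntegral, intervalIntegral.integral_comp_add_left
    (fun y => F (Int.fract y)), add_zero, (periodic_comp_fract F).intervalIntegral_add_eq x 0,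
    zero_add, ← setIntegral_Ico_eq_intervalIntegral, setIntegral_Ico_comp_fract]

end FractTranslation

noncomputable def circleExp (k : ℤ) (x : ℝ) : ℂ :=
  Complex.exp (((2 * π * k * x : ℝ) : ℂ) * Complex.I)

lemma circleExp_add (k : ℤ) (x y : ℝ) :
    circleExp k (x + y) = circleExp k x * circleExp k y := by
  rw [circleExp, circleExp, circleExp, ← Complex.exp_add]
  push_cast
  ring_nf

lemma circleExp_neg_mul_self (k : ℤ) (x : ℝ) : circleExp (-k) x * circleExp k x = 1 := by
  rw [circleExp, circleExp, ← Complex.exp_add, ← Complex.exp_zero]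
  push_cast
  ring_nf

lemma circleExp_intCast (k n : ℤ) : circleExp k n = 1 := by
  rw [circleExp, ← Complex.exp_int_mul_two_pi_mul_I (k * n)]
  push_cast
  ring_nf

lemma circleExp_fract (k : ℤ) (x : ℝ) : circleExp k (Int.fract x) = circleExp k x := by
  rw [Int.fract, sub_eq_add_neg, ← Int.cast_neg, circleExp_add, circleExp_intCast, mul_one]

lemma norm_circleExp (k : ℤ) (x : ℝ) : ‖circleExp k x‖ = 1 :=
  Complex.norm_exp_ofReal_mul_I _

lemma conj_circleExp (k : ℤ) (x : ℝ) : starRingEnd ℂ (circleExp k x) = circleExp (-k) x := by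
  rw [circleExp, circleExp, ← Complex.exp_conj, map_mul, Complex.conj_ofReal, Complex.conj_I]
  push_cast
  ring_nf

lemma integrableOn_mul_circleExp {G : ℝ → ℂ} (hG : IntegrableOn G (Set.Ico 0 1)) (k : ℤ) :
    IntegrableOn (fun u => G u * circleExp k u) (Set.Ico 0 1) :=
  hG.mul_bdd (show Continuous (circleExp k) by unfold circleExp; fun_prop).aestronglyMeasurable
    (Filter.Eventually.of_forall fun u => (norm_circleExp k u).le)

noncomputable def fourierCoeffIco (G : ℝ → ℂ) (k : ℤ) : ℂ :=
  ∫ x in Set.Ico (0:ℝ) 1, G x * Complex.exp (-(((2 * π * k * x : ℝ) : ℂ) * Complex.I))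

lemma fourierCoeffIco_eq_integral (G : ℝ → ℂ) (k : ℤ) :
    fourierCoeffIco G k = ∫ x in Set.Ico (0:ℝ) 1, G x * circleExp (-k) x := by
  refine integral_congr_ae (Filter.Eventually.of_forall fun x => ?_)
  simp only [circleExp]
  push_cast
  ring_nf

lemma fourierCoeffIco_neg_ofReal (g : ℝ → ℝ) (k : ℤ) :
    fourierCoeffIco (fun x => (g x : ℂ)) (-k)
      = starRingEnd ℂ (fourierCoeffIco (fun x => (g x : ℂ)) k) := by
  simp only [fourierCoeffIco_eq_integral, ← integral_conj, map_mul, Complex.conj_ofReal,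
    conj_circleExp]

noncomputable def sumKernelOp (G h : ℝ → ℂ) (x : ℝ) : ℂ :=
  ∫ y in Set.Ico (0:ℝ) 1, G (Int.fract (x + y)) * h y

lemma sumKernelOp_one (G : ℝ → ℂ) (x : ℝ) :
    sumKernelOp G (fun _ => 1) x = ∫ u in Set.Ico (0:ℝ) 1, G u := by
  simp only [sumKernelOp, mul_one, setIntegral_Ico_comp_fract_add]

lemma kernel_mul_circleExp (G : ℝ → ℂ) (k : ℤ) (x y : ℝ) :
    G (Int.fract (x + y)) * circleExp k y
      = circleExp (-k) x * (G (Int.fract (x + y)) * circleExp k (Int.fract (x + y))) := by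
  rw [circleExp_fract, circleExp_add]
  linear_combination -(G (Int.fract (x + y)) * circleExp k y) * circleExp_neg_mul_self k x

lemma sumKernelOp_circleExp (G : ℝ → ℂ) (k : ℤ) (x : ℝ) :
    sumKernelOp G (circleExp k) x = fourierCoeffIco G (-k) * circleExp (-k) x := by
  simp only [sumKernelOp, kernel_mul_circleExp G k x, integral_const_mul,
    setIntegral_Ico_comp_fract_add (fun u => G u * circleExp k u), fourierCoeffIco_eq_integral,
    neg_neg]
  ring

lemma integrableOn_kernel_mul_circleExp {G : ℝ → ℂ} (hG : IntegrableOn G (Set.Ico 0 1))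
    (k : ℤ) (x : ℝ) :
    IntegrableOn (fun y => G (Int.fract (x + y)) * circleExp k y) (Set.Ico 0 1) := by
  simp only [kernel_mul_circleExp G k x]
  exact ((integrableOn_Ico_comp_fract_add (integrableOn_mul_circleExp hG k) x).const_mul _)

lemma sumKernelOp_circleExp_add_circleExp_neg {G : ℝ → ℂ} (hG : IntegrableOn G (Set.Ico 0 1))
    (a b : ℂ) (k : ℤ) (x : ℝ) :
    sumKernelOp G (fun y => a * circleExp k y + b * circleExp (-k) y) x
      = a * fourierCoeffIco G (-k) * circleExp (-k) x
        + b * fourierCoeffIco G k * circleExp k x := by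
  have h := sumKernelOp_circleExp G k x
  have h' := sumKernelOp_circleExp G (-k) x
  rw [neg_neg] at h'
  simp only [sumKernelOp, mul_add, mul_left_comm _ a, mul_left_comm _ b] at h h' ⊢
  rw [integral_add ((integrableOn_kernel_mul_circleExp hG k x).const_mul a)
    ((integrableOn_kernel_mul_circleExp hG (-k) x).const_mul b), integral_const_mul,
    integral_const_mul, h, h']
  ring

noncomputable def unitPhase (c : ℂ) : ℂ := if c = 0 then 1 else c / ‖c‖

lemma norm_mul_unitPhase (c : ℂ) : (‖c‖ : ℂ) * unitPhase c = c := by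
  unfold unitPhase
  split_ifs with hc
  · simp [hc]
  · exact mul_div_cancel₀ c (by simpa using hc)

lemma unitPhase_mul_conj (c : ℂ) : unitPhase c * starRingEnd ℂ c = ‖c‖ := by
  unfold unitPhase
  split_ifs with hc
  · simp [hc]
  · rw [div_mul_eq_mul_div, Complex.mul_conj', div_eq_iff (by simpa using hc)]
    ring

lemma sumKernelOp_unitPhase_eigen {G : ℝ → ℂ} (hG : IntegrableOn G (Set.Ico 0 1)) {k : ℤ}
    {c : ℂ} (hc : fourierCoeffIco G k = c) (hc' : fourierCoeffIco G (-k) = starRingEnd ℂ c)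
    {s : ℂ} (hs : s ^ 2 = 1) (x : ℝ) :
    sumKernelOp G (fun y => unitPhase c * circleExp k y + s * circleExp (-k) y) x
      = s * ‖c‖ * (unitPhase c * circleExp k x + s * circleExp (-k) x) := by
  rw [sumKernelOp_circleExp_add_circleExp_neg hG, hc, hc']
  linear_combination circleExp (-k) x * unitPhase_mul_conj c
    - s * circleExp k x * norm_mul_unitPhase c - ‖c‖ * circleExp (-k) x * hs

lemma tsum_eq_zero_of_apply_equiv_eq_neg {α β : Type*} [AddCommGroup β] [TopologicalSpace β]
    [IsTopologicalAddGroup β] [T2Space β] [IsAddTorsionFree β] {f : α → β} (σ : α ≃ α)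
    (hf : ∀ a, f (σ a) = -f a) : ∑' a, f a = 0 := by
  refine self_eq_neg.mp ?_
  calc ∑' a, f a = ∑' a, f (σ a) := (σ.tsum_eq f).symm
    _ = -∑' a, f a := by simp only [hf, tsum_neg]

lemma tsum_signed_pow_eq_zero (a : ℤ → ℝ) (ha : ∀ k, a (-k) = a k) {n : ℕ} (hn : Odd n) :
    ∑' k : {k : ℤ // k ≠ 0}, (if (0:ℤ) < k.1 then a k.1 else -a k.1) ^ n = 0 := by
  refine tsum_eq_zero_of_apply_equiv_eq_neg (Equiv.subtypeEquiv (Equiv.neg ℤ) (by simp)) ?_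
  rintro ⟨k, hk⟩
  simp only [Equiv.subtypeEquiv_apply, Equiv.neg_apply, ha]
  rcases hk.lt_or_gt with hneg | hpos
  · rw [if_pos (by omega), if_neg (by omega), hn.neg_pow, neg_neg]
  · rw [if_neg (by omega), if_pos hpos, hn.neg_pow]

theorem convolution_kernel_spectrum_general
    (p : ℝ) (g : ℝ → ℝ)
    (hgint : IntegrableOn g (Set.Ico (0:ℝ) 1))
    (hgp : ∫ x in Set.Ico (0:ℝ) 1, g x = p) :
    -- the Fourier coefficients of g
    let ghat : ℤ → ℂ := fun k =>
      ∫ x in Set.Ico (0:ℝ) 1, (g x : ℂ) * Complex.exp (-(((2 * π * k * x : ℝ) : ℂ) * Complex.I))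
    -- the integral operator with kernel φ(x₁,x₂) = g(x₁ ⊕ x₂)
    let T : (ℝ → ℂ) → (ℝ → ℂ) := fun h x =>
      ∫ y in Set.Ico (0:ℝ) 1, (g (Int.fract (x + y)) : ℂ) * h y
    -- the exponentials e_k
    let e : ℤ → ℝ → ℂ := fun k x => Complex.exp (((2 * π * k * x : ℝ) : ℂ) * Complex.I)
    -- the constant function 1 is an eigenfunction with eigenvalue p
    (∀ x : ℝ, T (fun _ => 1) x = (p : ℂ)) ∧
    -- T e_k = ĝ(-k) e_{-k}
    (∀ (k : ℤ) (x : ℝ), T (e k) x = ghat (-k) * e (-k) x) ∧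
    -- for k ≥ 1, ω_k e_k ± e_{-k} are eigenfunctions with eigenvalues ±‖ĝ(k)‖
    (∀ k : ℤ, 1 ≤ k →
      let ω : ℂ := if ghat k = 0 then 1 else ghat k / ‖ghat k‖
      (∀ x : ℝ, T (fun y => ω * e k y + e (-k) y) x
          = (‖ghat k‖ : ℂ) * (ω * e k x + e (-k) x)) ∧
      (∀ x : ℝ, T (fun y => ω * e k y - e (-k) y) x
          = -(‖ghat k‖ : ℂ) * (ω * e k x - e (-k) x))) ∧
    -- consequently the cubes of the nonconstant eigenvalues sum to zero
    (∑' k : {k : ℤ // k ≠ 0},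
        (if (0:ℤ) < k.1 then ‖ghat k.1‖ else -‖ghat k.1‖) ^ 3 = 0) := by
  intro ghat T e
  have hG : IntegrableOn (fun u => (g u : ℂ)) (Set.Ico 0 1) := hgint.ofReal
  have hconj : ∀ k, ghat (-k) = starRingEnd ℂ (ghat k) := fourierCoeffIco_neg_ofReal g
  refine ⟨fun x => ?_, sumKernelOp_circleExp (fun u => (g u : ℂ)),
    fun k _ => ⟨fun x => ?_, fun x => ?_⟩, ?_⟩
  · rw [show T (fun _ => 1) x = _ from sumKernelOp_one (fun u => (g u : ℂ)) x,
      integral_complex_ofReal, hgp]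
  · have h := sumKernelOp_unitPhase_eigen hG rfl (hconj k) (one_pow 2) x
    simp only [one_mul] at h
    exact h
  · have h := sumKernelOp_unitPhase_eigen hG rfl (hconj k) (s := -1) (by norm_num) x
    simp only [neg_one_mul, ← sub_eq_add_neg] at h
    exact h
  · exact tsum_signed_pow_eq_zero (fun k => ‖ghat k‖)
      (fun k => by rw [hconj, Complex.norm_conj]) (by decide)

theorem convolution_kernel_spectrum
    (p : ℝ) (g : ℝ → ℝ)
    (hg0 : ∀ x, 0 ≤ g x)
    (hgint : IntegrableOn g (Set.Ico (0:ℝ) 1))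
    (hgp : ∫ x in Set.Ico (0:ℝ) 1, g x = p) :
    -- the Fourier coefficients of g
    let ghat : ℤ → ℂ := fun k =>
      ∫ x in Set.Ico (0:ℝ) 1, (g x : ℂ) * Complex.exp (-(((2 * π * k * x : ℝ) : ℂ) * Complex.I))
    -- the integral operator with kernel φ(x₁,x₂) = g(x₁ ⊕ x₂)
    let T : (ℝ → ℂ) → (ℝ → ℂ) := fun h x =>
      ∫ y in Set.Ico (0:ℝ) 1, (g (Int.fract (x + y)) : ℂ) * h y
    -- the exponentials e_k
    let e : ℤ → ℝ → ℂ := fun k x => Complex.exp (((2 * π * k * x : ℝ) : ℂ) * Complex.I)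
    -- the constant function 1 is an eigenfunction with eigenvalue p
    (∀ x : ℝ, T (fun _ => 1) x = (p : ℂ)) ∧
    -- T e_k = ĝ(-k) e_{-k}
    (∀ (k : ℤ) (x : ℝ), T (e k) x = ghat (-k) * e (-k) x) ∧
    -- for k ≥ 1, ω_k e_k ± e_{-k} are eigenfunctions with eigenvalues ±‖ĝ(k)‖
    (∀ k : ℤ, 1 ≤ k →
      let ω : ℂ := if ghat k = 0 then 1 else ghat k / ‖ghat k‖
      (∀ x : ℝ, T (fun y => ω * e k y + e (-k) y) x
          = (‖ghat k‖ : ℂ) * (ω * e k x + e (-k) x)) ∧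
      (∀ x : ℝ, T (fun y => ω * e k y - e (-k) y) x
          = -(‖ghat k‖ : ℂ) * (ω * e k x - e (-k) x))) ∧
    -- consequently the cubes of the nonconstant eigenvalues sum to zero
    (∑' k : {k : ℤ // k ≠ 0},
        (if (0:ℤ) < k.1 then ‖ghat k.1‖ else -‖ghat k.1‖) ^ 3 = 0) :=
  convolution_kernel_spectrum_general p g hgint hgp
end
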